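/- arXiv:math/9812097 — 2 statements merged into one kernel-verified Lean document; each statement's English description precedes it below -/
import Mathlib

section
/- Let R be a rewrite system on T. If for every overlap between two rules of R (of any of the five types) the resulting critical pair resolves, then every critical pair of →_R resolves; in particular →_R is locally confluent, and hence →_R is confluent whenever →_R is additionally Noetherian. -/
variable {Γ Δ : Type} [Quiver.{0} Δ] {X : Γ → Type} {F : Γ → Δ}

/-- The set `T := ⨆_{B} ⨆_{A} XA × 𝒫(FA, B)` of tagged words `x|p`. -/
def Tagged (X : Γ → Type) (F : Γ → Δ) : Type :=
  Σ (B : Δ) (A : Γ), X A × Quiver.Path (F A) B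

namespace Tagged

/-- `τ(x|p) := tgt p`. -/
abbrev tau (t : Tagged X F) : Δ := t.1

/-- The action `(x|p)·q := x|pq` of a path `q` with `src q = τ t`. -/
def act (t : Tagged X F) {B B' : Δ} (h : t.tau = B) (q : Quiver.Path B B') : Tagged X F :=
  ⟨B', t.2.1, t.2.2.1, Quiver.Path.comp (h ▸ t.2.2.2 : Quiver.Path (F t.2.1) B) q⟩

end Tagged

/-- Pairs of parallel paths (same source and same target). -/
def PathPair (Δ : Type) [Quiver.{0} Δ] : Type :=
  Σ (a b : Δ), Quiver.Path a b × Quiver.Path a b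

/-- The reduction relation `→_R` generated by a rewrite system `R = (R_T, R_P)` on `T`. -/
inductive Red (RT : Set (Tagged X F × Tagged X F)) (RP : Set (PathPair Δ)) :
    Tagged X F → Tagged X F → Prop
  | tag {s u : Tagged X F} {B B' : Δ} (hmem : (s, u) ∈ RT)
      (hs : s.tau = B) (hu : u.tau = B) (q : Quiver.Path B B') :
      Red RT RP (s.act hs q) (u.act hu q)
  | path {s : Tagged X F} {a b B' : Δ} {l r : Quiver.Path a b}
      (hmem : (⟨a, b, (l, r)⟩ : PathPair Δ) ∈ RP)
      (hs : s.tau = a) (q : Quiver.Path b B') :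
      Red RT RP (s.act hs (l.comp q)) (s.act hs (r.comp q))

/-- One-step path rewriting with respect to the two-sided rules `R_P`. -/
def RedPath (RP : Set (PathPair Δ)) {a b : Δ} (p₁ p₂ : Quiver.Path a b) : Prop :=
  ∃ (c d : Δ) (l r : Quiver.Path c d) (u : Quiver.Path a c) (v : Quiver.Path d b),
    (⟨c, d, (l, r)⟩ : PathPair Δ) ∈ RP ∧ p₁ = (u.comp l).comp v ∧ p₂ = (u.comp r).comp v

/-- A pair of elements of `T` resolves if both reduce (in `→*_R`) to a common term. -/
def ResolvesT (RT : Set (Tagged X F × Tagged X F)) (RP : Set (PathPair Δ))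
    (t₁ t₂ : Tagged X F) : Prop :=
  ∃ v, Relation.ReflTransGen (Red RT RP) t₁ v ∧ Relation.ReflTransGen (Red RT RP) t₂ v

/-- A pair of parallel paths resolves if both reduce (via the rules `R_P`)
to a common path. -/
def ResolvesP (RP : Set (PathPair Δ)) {a b : Δ} (p₁ p₂ : Quiver.Path a b) : Prop :=
  ∃ w : Quiver.Path a b,
    Relation.ReflTransGen (fun p q => RedPath RP p q) p₁ w ∧
    Relation.ReflTransGen (fun p q => RedPath RP p q) p₂ w

/-- `(c₁, c₂)` is the critical pair in `T` resulting from an overlap of two rules of `R`,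
of types (i), (iv) or (v). -/
def OverlapPairT (RT : Set (Tagged X F × Tagged X F)) (RP : Set (PathPair Δ))
    (c₁ c₂ : Tagged X F) : Prop :=
  -- type (i): s₁ = s₂·q, resulting pair (u₁, u₂·q)
  (∃ (s₁ u₁ s₂ u₂ : Tagged X F) (B B' : Δ) (h₂ : s₂.tau = B) (hu₂ : u₂.tau = B)
      (q : Quiver.Path B B'),
      (s₁, u₁) ∈ RT ∧ (s₂, u₂) ∈ RT ∧ s₁ = s₂.act h₂ q ∧ c₁ = u₁ ∧ c₂ = u₂.act hu₂ q) ∨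
  -- type (iv): s₁·q = s·l, resulting pair (u₁·q, s·r)
  (∃ (s₁ u₁ s : Tagged X F) (a b B : Δ) (l r : Quiver.Path a b)
      (hs₁ : s₁.tau = B) (hu₁ : u₁.tau = B) (q : Quiver.Path B b) (hs : s.tau = a),
      (s₁, u₁) ∈ RT ∧ (⟨a, b, (l, r)⟩ : PathPair Δ) ∈ RP ∧
      s₁.act hs₁ q = s.act hs l ∧ c₁ = u₁.act hu₁ q ∧ c₂ = s.act hs r) ∨
  -- type (v): s₁ = s·(lq), resulting pair (u₁, s·(rq))
  (∃ (s₁ u₁ s : Tagged X F) (a b B : Δ) (l r : Quiver.Path a b)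
      (hs : s.tau = a) (q : Quiver.Path b B),
      (s₁, u₁) ∈ RT ∧ (⟨a, b, (l, r)⟩ : PathPair Δ) ∈ RP ∧
      s₁ = s.act hs (l.comp q) ∧ c₁ = u₁ ∧ c₂ = s.act hs (r.comp q))

/-- `(c₁, c₂)` is the critical pair of paths resulting from an overlap of two rules
of `R_P`, of type (ii) or (iii). -/
def OverlapPairP (RP : Set (PathPair Δ)) {a b : Δ} (c₁ c₂ : Quiver.Path a b) : Prop :=
  -- type (ii): l₁ = p l₂ q, resulting pair (r₁, p r₂ q)
  (∃ (l₁ r₁ : Quiver.Path a b) (a₂ b₂ : Δ) (l₂ r₂ : Quiver.Path a₂ b₂)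
      (p : Quiver.Path a a₂) (q : Quiver.Path b₂ b),
      (⟨a, b, (l₁, r₁)⟩ : PathPair Δ) ∈ RP ∧ (⟨a₂, b₂, (l₂, r₂)⟩ : PathPair Δ) ∈ RP ∧
      l₁ = (p.comp l₂).comp q ∧ c₁ = r₁ ∧ c₂ = (p.comp r₂).comp q) ∨
  -- type (iii): l₁ q = p l₂, resulting pair (r₁ q, p r₂)
  (∃ (b₁ a₂ : Δ) (l₁ r₁ : Quiver.Path a b₁) (l₂ r₂ : Quiver.Path a₂ b)
      (q : Quiver.Path b₁ b) (p : Quiver.Path a a₂),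
      (⟨a, b₁, (l₁, r₁)⟩ : PathPair Δ) ∈ RP ∧ (⟨a₂, b, (l₂, r₂)⟩ : PathPair Δ) ∈ RP ∧
      l₁.comp q = p.comp l₂ ∧ c₁ = r₁.comp q ∧ c₂ = p.comp r₂)

/-!
A reduction step rewrites either a prefix `s` of `t = s·q` (a rule of `R_T`) or a factor `l` of
the path in `t = s·(l q)` (a rule of `R_P`). Paths in a free category are equidivisible: if
`p₁ q₁ = p₂ q₂` and `q₂` is no longer than `q₁`, then `q₁ = m q₂` and `p₂ = p₁ m`. Hence the two
redexes of a peak are nested or overlap, and after cancelling a common right factor `·q` the peak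
is one of the overlaps (i)–(v). Reduction commutes with `·q`, so the resolution of that overlap
resolves the peak. Confluence under termination is then Newman's lemma.
-/

open Quiver Relation

theorem Quiver.Path.exists_eq_comp_of_comp_eq_comp {V : Type*} [Quiver V] {a b₁ b₂ c : V}
    {p₁ : Path a b₁} {q₁ : Path b₁ c} {p₂ : Path a b₂} {q₂ : Path b₂ c}
    (h : p₁.comp q₁ = p₂.comp q₂) (hlen : q₂.length ≤ q₁.length) :
    ∃ m : Path b₁ b₂, p₂ = p₁.comp m ∧ q₁ = m.comp q₂ := by
  induction q₂ with
  | nil => exact ⟨q₁, h.symm, (Path.comp_nil q₁).symm⟩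
  | cons q₂ e ih =>
    cases q₁ with
    | nil => simp [Path.length] at hlen
    | cons q₁ e₁ =>
      rw [Path.comp_cons, Path.comp_cons] at h
      obtain rfl := Path.obj_eq_of_cons_eq_cons h
      obtain rfl := eq_of_heq (Path.hom_heq_of_cons_eq_cons h)
      obtain ⟨m, rfl, rfl⟩ := ih (eq_of_heq (Path.heq_of_cons_eq_cons h))
        (Nat.le_of_succ_le_succ hlen)
      exact ⟨m, rfl, rfl⟩

theorem Relation.newman {α : Type*} {r : α → α → Prop} (wf : WellFounded (flip r))
    (lc : ∀ a b c, r a b → r a c → Join (ReflTransGen r) b c) {a b c : α}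
    (hab : ReflTransGen r a b) (hac : ReflTransGen r a c) : Join (ReflTransGen r) b c := by
  induction a using wf.induction generalizing b c with
  | _ a ih =>
    rcases hab.cases_head with rfl | ⟨b', hab', hb'b⟩
    · exact ⟨c, hac, .refl⟩
    rcases hac.cases_head with rfl | ⟨c', hac', hc'c⟩
    · exact ⟨b, .refl, hab⟩
    obtain ⟨d, hb'd, hc'd⟩ := lc a b' c' hab' hac'
    obtain ⟨e, hbe, hde⟩ := ih b' hab' hb'b hb'd
    obtain ⟨f, hcf, hef⟩ := ih c' hac' hc'c (hc'd.trans hde)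
    exact ⟨f, hbe.trans hef, hcf⟩

namespace Tagged

lemma act_act (t : Tagged X F) {B B' B'' : Δ} (h : t.tau = B) (q : Path B B')
    (q' : Path B' B'') : (t.act h q).act (B := B') rfl q' = t.act h (q.comp q') := by
  obtain ⟨C, A, x, p⟩ := t
  cases h
  simp only [act, Path.comp_assoc]
  rfl

lemma exists_eq_act_of_act_eq_act {s₁ s₂ : Tagged X F} {B₁ B₂ C : Δ} (h₁ : s₁.tau = B₁)
    (h₂ : s₂.tau = B₂) {q₁ : Path B₁ C} {q₂ : Path B₂ C} (h : s₁.act h₁ q₁ = s₂.act h₂ q₂)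
    (hlen : q₂.length ≤ q₁.length) :
    ∃ m : Path B₁ B₂, s₂ = s₁.act h₁ m ∧ q₁ = m.comp q₂ := by
  obtain ⟨D₁, A₁, x₁, p₁⟩ := s₁
  obtain ⟨D₂, A₂, x₂, p₂⟩ := s₂
  cases h₁
  cases h₂
  have h' : (⟨C, A₁, x₁, p₁.comp q₁⟩ : Tagged X F) = ⟨C, A₂, x₂, p₂.comp q₂⟩ := h
  simp only [Sigma.mk.injEq, heq_eq_eq, true_and] at h'
  obtain ⟨rfl, h'⟩ := h'
  simp only [heq_eq_eq, Prod.mk.injEq] at h'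
  obtain ⟨rfl, h'⟩ := h'
  obtain ⟨m, rfl, rfl⟩ := Path.exists_eq_comp_of_comp_eq_comp h' hlen
  exact ⟨m, rfl, rfl⟩

end Tagged

open Tagged

section Reduction

variable {RT : Set (Tagged X F × Tagged X F)} {RP : Set (PathPair Δ)}

lemma Red.tau_eq {t u : Tagged X F} (h : Red RT RP t u) : t.tau = u.tau := by
  cases h <;> rfl

lemma tau_eq_of_reflTransGen_red {t u : Tagged X F} (h : ReflTransGen (Red RT RP) t u) :
    t.tau = u.tau := by
  induction h with
  | refl => rfl
  | tail _ h ih => exact ih.trans h.tau_eq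

lemma Red.act {t u : Tagged X F} (h : Red RT RP t u) {B B' : Δ}
    (ht : t.tau = B) (hu : u.tau = B) (q : Path B B') :
    Red RT RP (t.act ht q) (u.act hu q) := by
  cases h with
  | @tag _ _ _ C hmem hs hu' q₀ =>
    obtain rfl : C = B := ht
    rw [act_act, act_act]
    exact Red.tag hmem hs hu' (q₀.comp q)
  | @path _ _ _ C _ _ hmem hs q₀ =>
    obtain rfl : C = B := ht
    rw [act_act, act_act, Path.comp_assoc, Path.comp_assoc]
    exact Red.path hmem hs (q₀.comp q)

lemma reflTransGen_red_act {t u : Tagged X F} (h : ReflTransGen (Red RT RP) t u) {B B' : Δ}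
    (ht : t.tau = B) (hu : u.tau = B) (q : Path B B') :
    ReflTransGen (Red RT RP) (t.act ht q) (u.act hu q) := by
  induction h with
  | refl => exact .refl
  | tail _ h ih =>
    have hm := h.tau_eq.trans hu
    exact (ih hm).tail (h.act hm hu q)

lemma RedPath.red_act {a b B' : Δ} {p₁ p₂ : Path a b} (h : RedPath RP p₁ p₂)
    (t : Tagged X F) (ht : t.tau = a) (q : Path b B') :
    Red RT RP (t.act ht (p₁.comp q)) (t.act ht (p₂.comp q)) := by
  obtain ⟨c, d, l, r, u, v, hmem, rfl, rfl⟩ := h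
  have h := Red.path (s := t.act ht u) (RT := RT) hmem rfl (v.comp q)
  rw [act_act, act_act] at h
  simpa only [Path.comp_assoc] using h

lemma ResolvesT.symm {t u : Tagged X F} (h : ResolvesT RT RP t u) : ResolvesT RT RP u t :=
  let ⟨v, htv, huv⟩ := h
  ⟨v, huv, htv⟩

lemma ResolvesT.act {c₁ c₂ : Tagged X F} (h : ResolvesT RT RP c₁ c₂) {B B' : Δ}
    (h₁ : c₁.tau = B) (h₂ : c₂.tau = B) (q : Path B B') :
    ResolvesT RT RP (c₁.act h₁ q) (c₂.act h₂ q) :=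
  let ⟨v, h₁v, h₂v⟩ := h
  have hv := (tau_eq_of_reflTransGen_red h₂v).symm.trans h₂
  ⟨v.act hv q, reflTransGen_red_act h₁v h₁ hv q, reflTransGen_red_act h₂v h₂ hv q⟩

lemma ResolvesP.resolvesT_act {a b B' : Δ} {p₁ p₂ : Path a b} (h : ResolvesP RP p₁ p₂)
    (t : Tagged X F) (ht : t.tau = a) (q : Path b B') :
    ResolvesT RT RP (t.act ht (p₁.comp q)) (t.act ht (p₂.comp q)) :=
  let ⟨w, h₁w, h₂w⟩ := h
  let f := fun p : Path a b => t.act ht (p.comp q)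
  ⟨f w, h₁w.lift f fun _ _ hp => hp.red_act t ht q, h₂w.lift f fun _ _ hp => hp.red_act t ht q⟩

lemma resolvesT_peak_tag_tag
    (hT : ∀ c₁ c₂ : Tagged X F, OverlapPairT RT RP c₁ c₂ → ResolvesT RT RP c₁ c₂)
    {s₁ u₁ s₂ u₂ : Tagged X F} {B₁ B₂ C : Δ} (hm₁ : (s₁, u₁) ∈ RT) (hm₂ : (s₂, u₂) ∈ RT)
    (hs₁ : s₁.tau = B₁) (hu₁ : u₁.tau = B₁) (hs₂ : s₂.tau = B₂) (hu₂ : u₂.tau = B₂)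
    {q₁ : Path B₁ C} {q₂ : Path B₂ C} (heq : s₁.act hs₁ q₁ = s₂.act hs₂ q₂)
    (hlen : q₂.length ≤ q₁.length) :
    ResolvesT RT RP (u₁.act hu₁ q₁) (u₂.act hu₂ q₂) := by
  obtain ⟨m, rfl, rfl⟩ := exists_eq_act_of_act_eq_act hs₁ hs₂ heq hlen
  have hov : OverlapPairT RT RP u₂ (u₁.act hu₁ m) :=
    Or.inl ⟨_, u₂, s₁, u₁, B₁, B₂, hs₁, hu₁, m, hm₂, hm₁, rfl, rfl, rfl⟩
  rw [← act_act]
  exact ((hT _ _ hov).act hu₂ rfl q₂).symm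

lemma resolvesT_peak_tag_path
    (hT : ∀ c₁ c₂ : Tagged X F, OverlapPairT RT RP c₁ c₂ → ResolvesT RT RP c₁ c₂)
    {s₁ u₁ s : Tagged X F} {B₁ a b C : Δ} {l r : Path a b}
    (hm₁ : (s₁, u₁) ∈ RT) (hm₂ : (⟨a, b, (l, r)⟩ : PathPair Δ) ∈ RP)
    (hs₁ : s₁.tau = B₁) (hu₁ : u₁.tau = B₁) (hs : s.tau = a)
    {q₁ : Path B₁ C} {q₂ : Path b C} (heq : s₁.act hs₁ q₁ = s.act hs (l.comp q₂)) :
    ResolvesT RT RP (u₁.act hu₁ q₁) (s.act hs (r.comp q₂)) := by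
  rw [← act_act] at heq
  rcases le_total q₂.length q₁.length with hlen | hlen
  · obtain ⟨m, hm, rfl⟩ := exists_eq_act_of_act_eq_act (B₂ := b) hs₁ rfl heq hlen
    have hov : OverlapPairT RT RP (u₁.act hu₁ m) (s.act hs r) :=
      Or.inr (Or.inl ⟨s₁, u₁, s, a, b, B₁, l, r, hs₁, hu₁, m, hs, hm₁, hm₂, hm.symm, rfl, rfl⟩)
    rw [← act_act, ← act_act]
    exact (hT _ _ hov).act rfl rfl q₂
  · obtain ⟨m, rfl, rfl⟩ := exists_eq_act_of_act_eq_act (B₁ := b) rfl hs₁ heq.symm hlen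
    have hov : OverlapPairT RT RP u₁ (s.act hs (r.comp m)) :=
      Or.inr (Or.inr ⟨_, u₁, s, a, b, B₁, l, r, hs, m, hm₁, hm₂, act_act .., rfl, rfl⟩)
    rw [← Path.comp_assoc, ← act_act]
    exact (hT _ _ hov).act hu₁ rfl q₁

lemma resolvesT_peak_path_path
    (hP : ∀ (a b : Δ) (c₁ c₂ : Path a b), OverlapPairP RP c₁ c₂ → ResolvesP RP c₁ c₂)
    {s s' : Tagged X F} {a₁ b₁ a₂ b₂ C : Δ} {l₁ r₁ : Path a₁ b₁} {l₂ r₂ : Path a₂ b₂}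
    (hm₁ : (⟨a₁, b₁, (l₁, r₁)⟩ : PathPair Δ) ∈ RP)
    (hm₂ : (⟨a₂, b₂, (l₂, r₂)⟩ : PathPair Δ) ∈ RP)
    (hs : s.tau = a₁) (hs' : s'.tau = a₂) {q₁ : Path b₁ C} {q₂ : Path b₂ C}
    (heq : s.act hs (l₁.comp q₁) = s'.act hs' (l₂.comp q₂))
    (hlen : (l₂.comp q₂).length ≤ (l₁.comp q₁).length) :
    ResolvesT RT RP (s.act hs (r₁.comp q₁)) (s'.act hs' (r₂.comp q₂)) := by
  obtain ⟨m, rfl, hq⟩ := exists_eq_act_of_act_eq_act hs hs' heq hlen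
  rw [← Path.comp_assoc] at hq
  rw [act_act, ← Path.comp_assoc]
  rcases le_total q₂.length q₁.length with hlen' | hlen'
  · obtain ⟨m', hm', rfl⟩ := Path.exists_eq_comp_of_comp_eq_comp hq hlen'
    have hov : OverlapPairP RP (r₁.comp m') (m.comp r₂) :=
      Or.inr ⟨b₁, a₂, l₁, r₁, l₂, r₂, m', m, hm₁, hm₂, hm'.symm, rfl, rfl⟩
    rw [← Path.comp_assoc]
    exact (hP _ _ _ _ hov).resolvesT_act s hs q₂
  · obtain ⟨m', rfl, rfl⟩ := Path.exists_eq_comp_of_comp_eq_comp hq.symm hlen'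
    have hov : OverlapPairP RP r₁ ((m.comp r₂).comp m') :=
      Or.inl ⟨_, r₁, a₂, b₂, l₂, r₂, m, m', hm₁, hm₂, rfl, rfl, rfl⟩
    rw [← Path.comp_assoc]
    exact (hP _ _ _ _ hov).resolvesT_act s hs q₁

lemma resolvesT_of_red_of_red
    (hT : ∀ c₁ c₂ : Tagged X F, OverlapPairT RT RP c₁ c₂ → ResolvesT RT RP c₁ c₂)
    (hP : ∀ (a b : Δ) (c₁ c₂ : Path a b), OverlapPairP RP c₁ c₂ → ResolvesP RP c₁ c₂)
    {t u₁ u₂ : Tagged X F} (h₁ : Red RT RP t u₁) (h₂ : Red RT RP t u₂) :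
    ResolvesT RT RP u₁ u₂ := by
  generalize heq : t = t' at h₂
  cases h₁ with
  | @tag _ _ _ C₁ hm₁ hs₁ hu₁ q₁ =>
    cases h₂ with
    | @tag _ _ _ C₂ hm₂ hs₂ hu₂ q₂ =>
      obtain rfl : C₁ = C₂ := congrArg Sigma.fst heq
      rcases le_total q₂.length q₁.length with hlen | hlen
      · exact resolvesT_peak_tag_tag hT hm₁ hm₂ hs₁ hu₁ hs₂ hu₂ heq hlen
      · exact (resolvesT_peak_tag_tag hT hm₂ hm₁ hs₂ hu₂ hs₁ hu₁ heq.symm hlen).symm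
    | path hm₂ hs₂ q₂ =>
      obtain rfl := congrArg Sigma.fst heq
      exact resolvesT_peak_tag_path hT hm₁ hm₂ hs₁ hu₁ hs₂ heq
  | @path _ _ _ C₁ l₁ _ hm₁ hs₁ q₁ =>
    cases h₂ with
    | tag hm₂ hs₂ hu₂ q₂ =>
      obtain rfl := congrArg Sigma.fst heq
      exact (resolvesT_peak_tag_path hT hm₂ hm₁ hs₂ hu₂ hs₁ heq.symm).symm
    | @path _ _ _ C₂ l₂ _ hm₂ hs₂ q₂ =>
      obtain rfl := congrArg Sigma.fst heq
      rcases le_total (l₂.comp q₂).length (l₁.comp q₁).length with hlen | hlen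
      · exact resolvesT_peak_path_path hP hm₁ hm₂ hs₁ hs₂ heq hlen
      · exact (resolvesT_peak_path_path hP hm₂ hm₁ hs₂ hs₁ heq.symm hlen).symm

end Reduction

theorem stmt6_general (RT : Set (Tagged X F × Tagged X F)) (RP : Set (PathPair Δ))
    (hT : ∀ c₁ c₂ : Tagged X F, OverlapPairT RT RP c₁ c₂ → ResolvesT RT RP c₁ c₂)
    (hP : ∀ (a b : Δ) (c₁ c₂ : Quiver.Path a b), OverlapPairP RP c₁ c₂ → ResolvesP RP c₁ c₂) :
    (∀ t₁ t₂ : Tagged X F, (∃ t, Red RT RP t t₁ ∧ Red RT RP t t₂) → ResolvesT RT RP t₁ t₂) ∧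
    (∀ t u₁ u₂ : Tagged X F, Red RT RP t u₁ → Red RT RP t u₂ → ResolvesT RT RP u₁ u₂) ∧
    ((¬ ∃ f : ℕ → Tagged X F, ∀ n, Red RT RP (f n) (f (n + 1))) →
      ∀ t u₁ u₂ : Tagged X F, Relation.ReflTransGen (Red RT RP) t u₁ →
        Relation.ReflTransGen (Red RT RP) t u₂ → ResolvesT RT RP u₁ u₂) := by
  have lc (t u₁ u₂ : Tagged X F) (h₁ : Red RT RP t u₁) (h₂ : Red RT RP t u₂) :
      ResolvesT RT RP u₁ u₂ :=
    resolvesT_of_red_of_red hT hP h₁ h₂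
  refine ⟨fun t₁ t₂ ⟨t, h₁, h₂⟩ => lc t t₁ t₂ h₁ h₂, lc, fun hnoeth _ _ _ h₁ h₂ => ?_⟩
  have wf : WellFounded (flip (Red RT RP)) :=
    wellFounded_iff_isEmpty_descending_chain.mpr ⟨fun ⟨f, hf⟩ => hnoeth ⟨f, hf⟩⟩
  exact newman wf lc h₁ h₂

/-- If all critical pairs resulting from overlaps between rules of `R` resolve, then all
critical pairs of `→_R` resolve; in particular `→_R` is locally confluent, and hence
confluent whenever it is additionally Noetherian. -/
theorem stmt6 (RT : Set (Tagged X F × Tagged X F)) (RP : Set (PathPair Δ))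
    (hRT : ∀ p ∈ RT, Tagged.tau p.1 = Tagged.tau p.2)
    (hT : ∀ c₁ c₂ : Tagged X F, OverlapPairT RT RP c₁ c₂ → ResolvesT RT RP c₁ c₂)
    (hP : ∀ (a b : Δ) (c₁ c₂ : Quiver.Path a b), OverlapPairP RP c₁ c₂ → ResolvesP RP c₁ c₂) :
    (∀ t₁ t₂ : Tagged X F, (∃ t, Red RT RP t t₁ ∧ Red RT RP t t₂) → ResolvesT RT RP t₁ t₂) ∧
    (∀ t u₁ u₂ : Tagged X F, Red RT RP t u₁ → Red RT RP t u₂ → ResolvesT RT RP u₁ u₂) ∧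
    ((¬ ∃ f : ℕ → Tagged X F, ∀ n, Red RT RP (f n) (f (n + 1))) →
      ∀ t u₁ u₂ : Tagged X F, Relation.ReflTransGen (Red RT RP) t u₁ →
        Relation.ReflTransGen (Red RT RP) t u₂ → ResolvesT RT RP u₁ u₂) :=
  stmt6_general RT RP hT hP
end

section
/- For every identity Y-sequence ι, we have ι ↔*_{R_P} λ (ι is Peiffer equivalent to the empty sequence λ) if and only if α(ι) = 0 in ℤG[ℛ]. -/
/-- A letter `(ρ, u)^ε` of a Y-sequence: an element of `Y = ℛ × F(X)` together with a
sign (`true` for `+`, `false` for `-`). -/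
abbrev YLetter (X R : Type) : Type := (R × FreeGroup X) × Bool

/-- The action of `F(X)` on letters: `(ρ, u)^ε · x := (ρ, u x)^ε`. -/
def actLetter {X R : Type} (x : FreeGroup X) (y : YLetter X R) : YLetter X R :=
  ((y.1.1, y.1.2 * x), y.2)

/-- The letterwise action of `F(X)` on Y-sequences. -/
def actSeq {X R : Type} (x : FreeGroup X) (a : List (YLetter X R)) : List (YLetter X R) :=
  a.map (actLetter x)

/-- `δ((ρ, u)^ε) := u⁻¹ (w ρ)^{ε} u`. -/
def deltaLetter {X R : Type} (w : R → FreeGroup X) (y : YLetter X R) : FreeGroup X :=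
  y.1.2⁻¹ * (if y.2 then w y.1.1 else (w y.1.1)⁻¹) * y.1.2

/-- The monoid homomorphism `δ` on Y-sequences. -/
def deltaSeq {X R : Type} (w : R → FreeGroup X) (a : List (YLetter X R)) : FreeGroup X :=
  (a.map (deltaLetter w)).prod

/-- The Peiffer rules `R_P`:
`y⁻z⁺y⁺ → z⁺^{δ y⁺}`, `y⁺z⁻y⁻ → z⁻^{δ y⁻}`, `y⁻y⁺ → λ` and `y⁺y⁻ → λ`. -/
inductive PeifferRule {X R : Type} (w : R → FreeGroup X) :
    List (YLetter X R) → List (YLetter X R) → Prop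
  | r1 (y z : R × FreeGroup X) :
      PeifferRule w [(y, false), (z, true), (y, true)]
        [actLetter (deltaLetter w (y, true)) (z, true)]
  | r2 (y z : R × FreeGroup X) :
      PeifferRule w [(y, true), (z, false), (y, false)]
        [actLetter (deltaLetter w (y, false)) (z, false)]
  | r3 (y : R × FreeGroup X) : PeifferRule w [(y, false), (y, true)] []
  | r4 (y : R × FreeGroup X) : PeifferRule w [(y, true), (y, false)] []

/-- One-step rewriting with respect to the Peiffer rules. -/
def PeifferStep {X R : Type} (w : R → FreeGroup X)
    (a b : List (YLetter X R)) : Prop :=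
  ∃ u v lhs rhs, PeifferRule w lhs rhs ∧ a = u ++ lhs ++ v ∧ b = u ++ rhs ++ v

/-- Peiffer equivalence `↔*_{R_P}`: the reflexive–symmetric–transitive closure
of one-step Peiffer rewriting. -/
def PeifferEquiv {X R : Type} (w : R → FreeGroup X) :
    List (YLetter X R) → List (YLetter X R) → Prop :=
  Relation.EqvGen (PeifferStep w)

/-- The formal inverse `yₙ^{-εₙ} ⋯ y₁^{-ε₁}` of a Y-sequence `y₁^{ε₁} ⋯ yₙ^{εₙ}`. -/
def invSeq {X R : Type} (a : List (YLetter X R)) : List (YLetter X R) :=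
  a.reverse.map (fun y => (y.1, !y.2))

/-- The group `G` presented by `grp⟨X, ℛ, w⟩`. -/
abbrev PresGroup {X R : Type} (w : R → FreeGroup X) : Type :=
  FreeGroup X ⧸ Subgroup.normalClosure (Set.range w)

/-- The quotient homomorphism `θ : F(X) → G`. -/
def theta {X R : Type} (w : R → FreeGroup X) : FreeGroup X →* PresGroup w :=
  QuotientGroup.mk' (Subgroup.normalClosure (Set.range w))

/-- `α((ρ,u)^ε) := ρ · (ε θ(u)) ∈ ℤG[ℛ]`. -/
noncomputable def alphaLetter {X R : Type} (w : R → FreeGroup X) (y : YLetter X R) :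
    R →₀ MonoidAlgebra ℤ (PresGroup w) :=
  Finsupp.single y.1.1
    ((MonoidAlgebra.single (theta w y.1.2) (if y.2 then (1 : ℤ) else -1) :
      MonoidAlgebra ℤ (PresGroup w)))

/-- `α` on Y-sequences: `α((ρ₁,u₁)^{ε₁}⋯(ρₙ,uₙ)^{εₙ}) := Σᵢ ρᵢ·(εᵢθ(uᵢ))`,
with the empty sequence sent to `0`. -/
noncomputable def alphaSeq {X R : Type} (w : R → FreeGroup X)
    (a : List (YLetter X R)) : R →₀ MonoidAlgebra ℤ (PresGroup w) :=
  (a.map (alphaLetter w)).sum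

/-!
Y-sequences modulo Peiffer equivalence form a group `C` (the free crossed module of the
presentation), and `δ` induces a homomorphism `∂ : C → F(X)`. The Peiffer rules say that
conjugation in `C` is the action of `F(X)` through `∂`; hence `ker ∂`, the classes of identity
Y-sequences, is central. The image of `∂` is a subgroup of a free group, hence free, so `∂` splits,
and the central kernel of a split homomorphism meets `[C, C]` trivially. Finally, `α` is invariant
under the Peiffer rules, and there is a homomorphism `ℤG[ℛ] → Cᵃᵇ` taking `α(a)` to the class of
`a`: so `α(ι) = 0` puts an identity sequence `ι` into `ker ∂ ∩ [C, C] = 1`.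
-/

theorem IsFreeGroup.exists_comp_eq_id {G H : Type*} [Group G] [Group H] [IsFreeGroup H]
    (f : G →* H) (hf : Function.Surjective f) : ∃ s : H →* G, f.comp s = MonoidHom.id H :=
  ⟨IsFreeGroup.lift fun a => (hf (IsFreeGroup.of a)).choose,
    IsFreeGroup.ext_hom fun a => by simpa using (hf (IsFreeGroup.of a)).choose_spec⟩

theorem MonoidHom.eq_one_of_mem_ker_of_mem_commutator {G H : Type*} [Group G] [Group H]
    (f : G →* H) [IsFreeGroup f.range] (hcen : f.ker ≤ Subgroup.center G) {k : G}
    (hk : f k = 1) (hc : k ∈ commutator G) : k = 1 := by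
  obtain ⟨s, hs⟩ := IsFreeGroup.exists_comp_eq_id f.rangeRestrict f.rangeRestrict_surjective
  have hfs : ∀ g, f (s (f.rangeRestrict g)) = f g := fun g =>
    congrArg Subtype.val (DFunLike.congr_fun hs (f.rangeRestrict g))
  have hcentral : ∀ g, g * (s (f.rangeRestrict g))⁻¹ ∈ Subgroup.center G := fun g =>
    hcen (by simp [hfs])
  -- `φ` retracts `G` onto the central subgroup `ker f`, so it kills commutators.
  let φ : G →* G :=
    { toFun g := g * (s (f.rangeRestrict g))⁻¹
      map_one' := by simp
      map_mul' a b := by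
        simp only [map_mul, mul_inv_rev]
        rw [mul_assoc a, ← mul_assoc b, ← Subgroup.mem_center_iff.1 (hcentral b), mul_assoc] }
  have hφ : commutator G ≤ φ.ker := by
    rw [commutator_def, Subgroup.commutator_le]
    intro a _ b _
    rw [MonoidHom.mem_ker, map_commutatorElement, commutatorElement_eq_one_iff_commute]
    exact Subgroup.mem_center_iff.1 (hcentral a) (φ b) |>.symm
  have hk' : f.rangeRestrict k = 1 := Subtype.ext hk
  simpa [φ, hk'] using hφ hc

section YSequences

open Relation

variable {X R : Type} {w : R → FreeGroup X}

def invLetter (y : YLetter X R) : YLetter X R := (y.1, !y.2)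

lemma invSeq_cons (y : YLetter X R) (a : List (YLetter X R)) :
    invSeq (y :: a) = invSeq a ++ [invLetter y] := by
  simp [invSeq, invLetter]

@[simp] lemma invSeq_invSeq (a : List (YLetter X R)) : invSeq (invSeq a) = a := by
  simp [invSeq, Function.comp_def, List.map_reverse]

@[simp] lemma actLetter_actLetter (x₁ x₂ : FreeGroup X) (y : YLetter X R) :
    actLetter x₂ (actLetter x₁ y) = actLetter (x₁ * x₂) y := by
  simp [actLetter, mul_assoc]

@[simp] lemma actLetter_one (y : YLetter X R) : actLetter 1 y = y := by
  simp [actLetter]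

@[simp] lemma actSeq_nil (x : FreeGroup X) : actSeq x ([] : List (YLetter X R)) = [] := rfl

@[simp] lemma actSeq_cons (x : FreeGroup X) (y : YLetter X R) (a : List (YLetter X R)) :
    actSeq x (y :: a) = actLetter x y :: actSeq x a := rfl

@[simp] lemma actSeq_actSeq (x₁ x₂ : FreeGroup X) (a : List (YLetter X R)) :
    actSeq x₂ (actSeq x₁ a) = actSeq (x₁ * x₂) a := by
  simp [actSeq, Function.comp_def]

@[simp] lemma actSeq_one (a : List (YLetter X R)) : actSeq 1 a = a := by
  simp [actSeq, show actLetter (1 : FreeGroup X) = (id : YLetter X R → _) from funext actLetter_one]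

@[simp] lemma deltaSeq_nil : deltaSeq w ([] : List (YLetter X R)) = 1 := rfl

@[simp] lemma deltaSeq_cons (y : YLetter X R) (a : List (YLetter X R)) :
    deltaSeq w (y :: a) = deltaLetter w y * deltaSeq w a := by
  simp [deltaSeq]

@[simp] lemma deltaSeq_append (a b : List (YLetter X R)) :
    deltaSeq w (a ++ b) = deltaSeq w a * deltaSeq w b := by
  simp [deltaSeq]

@[simp] lemma deltaLetter_false (p : R × FreeGroup X) :
    deltaLetter w (p, false) = (deltaLetter w (p, true))⁻¹ := by
  simp [deltaLetter, mul_assoc]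

@[simp] lemma deltaLetter_invLetter (y : YLetter X R) :
    deltaLetter w (invLetter y) = (deltaLetter w y)⁻¹ := by
  obtain ⟨p, _ | _⟩ := y <;> simp [invLetter]

@[simp] lemma deltaLetter_actLetter (x : FreeGroup X) (y : YLetter X R) :
    deltaLetter w (actLetter x y) = x⁻¹ * deltaLetter w y * x := by
  obtain ⟨p, _ | _⟩ := y <;> simp [deltaLetter, actLetter, mul_assoc]

lemma deltaSeq_actSeq (x : FreeGroup X) (a : List (YLetter X R)) :
    deltaSeq w (actSeq x a) = x⁻¹ * deltaSeq w a * x := by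
  induction a with
  | nil => simp
  | cons y a ih => simp [ih, mul_assoc]

@[simp] lemma alphaSeq_nil : alphaSeq w ([] : List (YLetter X R)) = 0 := rfl

@[simp] lemma alphaSeq_cons (y : YLetter X R) (a : List (YLetter X R)) :
    alphaSeq w (y :: a) = alphaLetter w y + alphaSeq w a := by
  simp [alphaSeq]

@[simp] lemma alphaSeq_append (a b : List (YLetter X R)) :
    alphaSeq w (a ++ b) = alphaSeq w a + alphaSeq w b := by
  simp [alphaSeq]

lemma theta_deltaLetter (y : YLetter X R) : theta w (deltaLetter w y) = 1 := by
  have hw (ρ : R) : theta w (w ρ) = 1 :=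
    (QuotientGroup.eq_one_iff _).2 (Subgroup.subset_normalClosure (Set.mem_range_self ρ))
  obtain ⟨p, _ | _⟩ := y <;> simp [deltaLetter, hw]

@[simp] lemma alphaLetter_false (p : R × FreeGroup X) :
    alphaLetter w (p, false) = -alphaLetter w (p, true) := by
  simp [alphaLetter, Finsupp.single_neg, MonoidAlgebra.single_neg]

lemma alphaLetter_actLetter {x : FreeGroup X} (hx : theta w x = 1) (y : YLetter X R) :
    alphaLetter w (actLetter x y) = alphaLetter w y := by
  unfold alphaLetter actLetter
  rw [map_mul, hx, mul_one]

theorem PeifferEquiv.eq_of_forall_rule {β : Type*} (f : List (YLetter X R) → β)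
    (hf : ∀ u v l r, PeifferRule w l r → f (u ++ l ++ v) = f (u ++ r ++ v))
    {a b : List (YLetter X R)} (h : PeifferEquiv w a b) : f a = f b :=
  congrArg (Quot.lift f fun _ _ ⟨u, v, l, r, hr, ha, hb⟩ => ha ▸ hb ▸ hf u v l r hr)
    (Quot.eqvGen_sound h)

theorem deltaSeq_eq_of_peifferEquiv {a b : List (YLetter X R)} (h : PeifferEquiv w a b) :
    deltaSeq w a = deltaSeq w b :=
  PeifferEquiv.eq_of_forall_rule _ (fun u v l r hr => by
    cases hr <;> simp [mul_assoc]) h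

theorem alphaSeq_eq_of_peifferEquiv {a b : List (YLetter X R)} (h : PeifferEquiv w a b) :
    alphaSeq w a = alphaSeq w b :=
  PeifferEquiv.eq_of_forall_rule _ (fun u v l r hr => by
    cases hr <;> simp [alphaLetter_actLetter, theta_deltaLetter] <;> abel) h

theorem PeifferEquiv.refl (a : List (YLetter X R)) : PeifferEquiv w a a := EqvGen.refl a

theorem PeifferEquiv.symm {a b : List (YLetter X R)} (h : PeifferEquiv w a b) :
    PeifferEquiv w b a :=
  EqvGen.symm _ _ h

theorem PeifferEquiv.trans {a b c : List (YLetter X R)} (h : PeifferEquiv w a b)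
    (h' : PeifferEquiv w b c) : PeifferEquiv w a c :=
  EqvGen.trans _ _ _ h h'

theorem PeifferEquiv.append_append {a b : List (YLetter X R)} (h : PeifferEquiv w a b)
    (c d : List (YLetter X R)) : PeifferEquiv w (c ++ a ++ d) (c ++ b ++ d) := by
  induction h with
  | rel a b hab =>
    obtain ⟨u, v, l, r, hr, rfl, rfl⟩ := hab
    exact EqvGen.rel _ _ ⟨c ++ u, v ++ d, l, r, hr, by simp, by simp⟩
  | refl => exact EqvGen.refl _
  | symm _ _ _ ih => exact EqvGen.symm _ _ ih
  | trans _ _ _ _ _ ih₁ ih₂ => exact EqvGen.trans _ _ _ ih₁ ih₂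

theorem PeifferEquiv.append {a b c d : List (YLetter X R)} (h : PeifferEquiv w a b)
    (h' : PeifferEquiv w c d) : PeifferEquiv w (a ++ c) (b ++ d) :=
  (by simpa using h.append_append [] c : PeifferEquiv w _ _).trans
    (by simpa using h'.append_append b [])

theorem peifferEquiv_cons_invLetter (y : YLetter X R) :
    PeifferEquiv w [y, invLetter y] [] := by
  obtain ⟨p, _ | _⟩ := y
  · exact EqvGen.rel _ _ ⟨[], [], _, _, .r3 p, rfl, rfl⟩
  · exact EqvGen.rel _ _ ⟨[], [], _, _, .r4 p, rfl, rfl⟩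

theorem peifferEquiv_append_invSeq (a : List (YLetter X R)) :
    PeifferEquiv w (a ++ invSeq a) [] := by
  induction a with
  | nil => exact .refl _
  | cons y a ih =>
    have h := (ih.append_append [y] [invLetter y]).trans (peifferEquiv_cons_invLetter y)
    simpa [invSeq_cons] using h

theorem PeifferEquiv.invSeq_congr {a b : List (YLetter X R)} (h : PeifferEquiv w a b) :
    PeifferEquiv w (invSeq a) (invSeq b) := by
  have h₁ : PeifferEquiv w (invSeq a ++ (b ++ invSeq b)) (invSeq a) := by
    simpa using (peifferEquiv_append_invSeq b).append_append (invSeq a) []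
  have h₂ : PeifferEquiv w ((invSeq a ++ a) ++ invSeq b) (invSeq b) := by
    simpa using (peifferEquiv_append_invSeq (invSeq a)).append_append [] (invSeq b)
  have h₃ : PeifferEquiv w (invSeq a ++ a ++ invSeq b) (invSeq a ++ b ++ invSeq b) :=
    h.append_append _ _
  exact h₁.symm.trans ((by simpa using h₃.symm : PeifferEquiv w _ _).trans h₂)

def peifferSetoid (w : R → FreeGroup X) : Setoid (List (YLetter X R)) :=
  ⟨PeifferEquiv w, Relation.EqvGen.is_equivalence _⟩

/-- The free crossed module of the presentation: Y-sequences modulo Peiffer equivalence,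
multiplied by concatenation. -/
def PeifferGroup (w : R → FreeGroup X) : Type := Quotient (peifferSetoid w)

namespace PeifferGroup

def mk (w : R → FreeGroup X) (a : List (YLetter X R)) : PeifferGroup w :=
  Quotient.mk (peifferSetoid w) a

lemma mk_surjective : Function.Surjective (mk w) := Quotient.mk_surjective

lemma mk_eq_mk {a b : List (YLetter X R)} : mk w a = mk w b ↔ PeifferEquiv w a b :=
  Quotient.eq

instance : Mul (PeifferGroup w) :=
  ⟨Quotient.map₂ (· ++ ·) fun _ _ h _ _ h' => h.append h'⟩

instance : One (PeifferGroup w) := ⟨mk w []⟩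

instance : Inv (PeifferGroup w) :=
  ⟨Quotient.map invSeq fun _ _ h => h.invSeq_congr⟩

lemma mk_nil : mk w [] = 1 := rfl

lemma mk_invSeq (a : List (YLetter X R)) : mk w (invSeq a) = (mk w a)⁻¹ := rfl

lemma mk_cons (y : YLetter X R) (a : List (YLetter X R)) : mk w (y :: a) = mk w [y] * mk w a :=
  rfl

instance : Group (PeifferGroup w) where
  mul_assoc a b c := by
    obtain ⟨a, rfl⟩ := mk_surjective a
    obtain ⟨b, rfl⟩ := mk_surjective b
    obtain ⟨c, rfl⟩ := mk_surjective c
    exact congrArg (mk w) (List.append_assoc a b c)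
  one_mul a := by
    obtain ⟨a, rfl⟩ := mk_surjective a
    rfl
  mul_one a := by
    obtain ⟨a, rfl⟩ := mk_surjective a
    exact congrArg (mk w) (List.append_nil a)
  inv_mul_cancel a := by
    obtain ⟨a, rfl⟩ := mk_surjective a
    exact mk_eq_mk.2 (by simpa using peifferEquiv_append_invSeq (invSeq a))

def boundary (w : R → FreeGroup X) : PeifferGroup w →* FreeGroup X where
  toFun := Quotient.lift (deltaSeq w) fun _ _ => deltaSeq_eq_of_peifferEquiv
  map_one' := rfl
  map_mul' a b := by
    obtain ⟨a, rfl⟩ := mk_surjective a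
    obtain ⟨b, rfl⟩ := mk_surjective b
    exact deltaSeq_append a b

@[simp] lemma boundary_mk (a : List (YLetter X R)) : boundary w (mk w a) = deltaSeq w a := rfl

lemma mk_rule {l r : List (YLetter X R)} (h : PeifferRule w l r) : mk w l = mk w r :=
  mk_eq_mk.2 (.rel _ _ ⟨[], [], l, r, h, by simp, by simp⟩)

lemma conj_invLetter_of_conj (s z : YLetter X R)
    (hs : ∀ z' : YLetter X R, z'.2 = z.2 →
      (mk w [s])⁻¹ * mk w [z'] * mk w [s] = mk w [actLetter (deltaLetter w s) z']) :
    (mk w [invLetter s])⁻¹ * mk w [z] * mk w [invLetter s] =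
      mk w [actLetter (deltaLetter w (invLetter s)) z] := by
  have h := hs (actLetter (deltaLetter w (invLetter s)) z) rfl
  rw [actLetter_actLetter, deltaLetter_invLetter, inv_mul_cancel, actLetter_one] at h
  rw [← h, show mk w [invLetter s] = (mk w [s])⁻¹ from mk_invSeq [s]]
  simp [mul_assoc]

lemma mk_conj_letter (s z : YLetter X R) :
    (mk w [s])⁻¹ * mk w [z] * mk w [s] = mk w [actLetter (deltaLetter w s) z] := by
  obtain ⟨y, b⟩ := s
  -- `r1` and `r2` conjugate letters of the same sign as `y`; inverting gives the mixed cases.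
  have pos : ∀ z' : YLetter X R, z'.2 = true →
      (mk w [(y, true)])⁻¹ * mk w [z'] * mk w [(y, true)] =
        mk w [actLetter (deltaLetter w (y, true)) z'] := by
    rintro ⟨p, c⟩ rfl
    exact mk_rule (.r1 y p)
  have neg : ∀ z' : YLetter X R, z'.2 = false →
      (mk w [(y, false)])⁻¹ * mk w [z'] * mk w [(y, false)] =
        mk w [actLetter (deltaLetter w (y, false)) z'] := by
    rintro ⟨p, c⟩ rfl
    exact mk_rule (.r2 y p)
  obtain ⟨p, _ | _⟩ := z <;> cases b
  · exact neg _ rfl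
  · exact conj_invLetter_of_conj (y, false) (p, false) neg
  · exact conj_invLetter_of_conj (y, true) (p, true) pos
  · exact pos _ rfl

theorem mk_conj (σ τ : List (YLetter X R)) :
    (mk w σ)⁻¹ * mk w τ * mk w σ = mk w (actSeq (deltaSeq w σ) τ) := by
  induction σ generalizing τ with
  | nil => simp [mk_nil]
  | cons s σ ih =>
    have hs : (mk w [s])⁻¹ * mk w τ * mk w [s] = mk w (actSeq (deltaLetter w s) τ) := by
      induction τ with
      | nil => simp [mk_nil]
      | cons z τ ihτ =>
        rw [mk_cons z, actSeq_cons, mk_cons _ (actSeq _ _), ← mk_conj_letter, ← ihτ]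
        simp [mul_assoc]
    rw [mk_cons s, deltaSeq_cons, ← actSeq_actSeq, ← ih, ← hs]
    simp [mul_assoc]

theorem ker_boundary_le_center : (boundary w).ker ≤ Subgroup.center (PeifferGroup w) := by
  intro k hk
  rw [Subgroup.mem_center_iff]
  intro g
  obtain ⟨κ, rfl⟩ := mk_surjective k
  obtain ⟨γ, rfl⟩ := mk_surjective g
  have h := mk_conj (w := w) κ γ
  rwa [show deltaSeq w κ = 1 from hk, actSeq_one, mul_assoc, inv_mul_eq_iff_eq_mul] at h

theorem normalClosure_le_range_boundary :
    Subgroup.normalClosure (Set.range w) ≤ (boundary w).range := by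
  have : (boundary w).range.Normal := ⟨by
    rintro _ ⟨c, rfl⟩ x
    obtain ⟨σ, rfl⟩ := mk_surjective c
    exact ⟨mk w (actSeq x⁻¹ σ), by simp [deltaSeq_actSeq]⟩⟩
  refine Subgroup.normalClosure_le_normal ?_
  rintro _ ⟨ρ, rfl⟩
  exact ⟨mk w [((ρ, 1), true)], by simp [deltaLetter]⟩

lemma abelianization_of_mk_letter_eq (ρ : R) {u u' : FreeGroup X}
    (h : u⁻¹ * u' ∈ Subgroup.normalClosure (Set.range w)) :
    Abelianization.of (mk w [((ρ, u), true)]) = Abelianization.of (mk w [((ρ, u'), true)]) := by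
  obtain ⟨c, hc⟩ := normalClosure_le_range_boundary h
  obtain ⟨σ, rfl⟩ := mk_surjective c
  have hconj := mk_conj (w := w) σ [((ρ, u), true)]
  rw [boundary_mk] at hc
  simp only [hc, actSeq_cons, actSeq_nil, actLetter, mul_inv_cancel_left] at hconj
  rw [← hconj, map_mul, map_mul, map_inv, mul_comm, ← mul_assoc, mul_inv_cancel, one_mul]

noncomputable def ofLetter (w : R → FreeGroup X) (ρ : R) :
    PresGroup w → Additive (Abelianization (PeifferGroup w)) :=
  Quotient.lift (fun u => .ofMul (Abelianization.of (mk w [((ρ, u), true)])))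
    fun _ _ h => congrArg _ (abelianization_of_mk_letter_eq ρ (QuotientGroup.leftRel_apply.1 h))

lemma ofLetter_theta (ρ : R) (u : FreeGroup X) :
    ofLetter w ρ (theta w u) = .ofMul (Abelianization.of (mk w [((ρ, u), true)])) := rfl

noncomputable def toAbelianization (w : R → FreeGroup X) :
    (R →₀ MonoidAlgebra ℤ (PresGroup w)) →+ Additive (Abelianization (PeifferGroup w)) :=
  Finsupp.liftAddHom fun ρ =>
    (Finsupp.liftAddHom fun g => zmultiplesHom _ (ofLetter w ρ g)).comp
      MonoidAlgebra.coeffAddEquiv.toAddMonoidHom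

lemma toAbelianization_single_single (ρ : R) (g : PresGroup w) (n : ℤ) :
    toAbelianization w (Finsupp.single ρ (MonoidAlgebra.single g n)) = n • ofLetter w ρ g := by
  simp [toAbelianization]

lemma toAbelianization_alphaLetter (y : YLetter X R) :
    toAbelianization w (alphaLetter w y) = .ofMul (Abelianization.of (mk w [y])) := by
  obtain ⟨⟨ρ, u⟩, _ | _⟩ := y
  · rw [alphaLetter_false, map_neg, show mk w [((ρ, u), false)] = (mk w [((ρ, u), true)])⁻¹ from
      mk_invSeq [((ρ, u), true)]]
    simp [alphaLetter, toAbelianization_single_single, ofLetter_theta]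
  · simp [alphaLetter, toAbelianization_single_single, ofLetter_theta]

lemma toAbelianization_alphaSeq (a : List (YLetter X R)) :
    toAbelianization w (alphaSeq w a) = .ofMul (Abelianization.of (mk w a)) := by
  induction a with
  | nil => simp [mk_nil]
  | cons y a ih =>
    rw [alphaSeq_cons, map_add, toAbelianization_alphaLetter, ih, mk_cons y a, map_mul, ofMul_mul]

end PeifferGroup

end YSequences

/-- An identity Y-sequence `ι` is Peiffer equivalent to the empty sequence if and
only if `α(ι) = 0` in the free right `ℤG`-module `ℤG[ℛ]`. -/
theorem stmt19 {X R : Type} (w : R → FreeGroup X)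
    (ι : List (YLetter X R)) (hid : deltaSeq w ι = 1) :
    PeifferEquiv w ι [] ↔ alphaSeq w ι = 0 := by
  refine ⟨fun h => alphaSeq_eq_of_peifferEquiv h, fun h => ?_⟩
  have hab : PeifferGroup.mk w ι ∈ commutator (PeifferGroup w) := by
    rw [← Abelianization.ker_of, MonoidHom.mem_ker]
    simpa [h] using (PeifferGroup.toAbelianization_alphaSeq (w := w) ι).symm
  exact PeifferGroup.mk_eq_mk.1 ((PeifferGroup.boundary w).eq_one_of_mem_ker_of_mem_commutator
    PeifferGroup.ker_boundary_le_center hid hab)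
end
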